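/- For every neat T₂ space X and every natural number n with 0 < n, pd(X^n) = pd(X). -/

import Mathlib

open Cardinal Set Topology

universe u v

/-- A neighborhood assignment on a topological space. -/
def NbhdAssign {X : Type u} [TopologicalSpace X] (U : X → Set X) : Prop :=
  ∀ x, IsOpen (U x) ∧ x ∈ U x

/-- The pinning down number of a family of sets: the least cardinality of a set
meeting every nonempty member of the family. -/
noncomputable def pdFam {α : Type u} (𝒜 : Set (Set α)) : Cardinal.{u} :=
  sInf {c | ∃ A : Set α, #A = c ∧ ∀ S ∈ 𝒜, S.Nonempty → (A ∩ S).Nonempty}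

/-- The pinning down number of a neighborhood assignment. -/
noncomputable def pdAssign {X : Type u} [TopologicalSpace X] (U : X → Set X) : Cardinal.{u} :=
  sInf {c | ∃ A : Set X, #A = c ∧ ∀ x, (A ∩ U x).Nonempty}

/-- The pinning down number of a topological space. -/
noncomputable def pdSpace (X : Type u) [TopologicalSpace X] : Cardinal.{u} :=
  ⨆ U : {U : X → Set X // NbhdAssign U}, pdAssign U.1

/-- The density of a topological space. -/
noncomputable def density (X : Type u) [TopologicalSpace X] : Cardinal.{u} :=
  sInf {c | ∃ D : Set X, #D = c ∧ Dense D}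

/-- The cellularity of a topological space. -/
noncomputable def cellularity (X : Type u) [TopologicalSpace X] : Cardinal.{u} :=
  ⨆ 𝒞 : {C : Set (Set X) // (∀ U ∈ C, IsOpen U ∧ U.Nonempty) ∧ C.PairwiseDisjoint id}, #𝒞.1

/-- `Δ(X)`: the least cardinality of a nonempty open subset of `X`. -/
noncomputable def Delta (X : Type u) [TopologicalSpace X] : Cardinal.{u} :=
  sInf {c | ∃ G : Set X, IsOpen G ∧ G.Nonempty ∧ #G = c}

/-- A space is neat if `Δ(X) = |X|`. -/
def Neat (X : Type u) [TopologicalSpace X] : Prop := Delta X = #X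

/-! ### Auxiliary lemmas -/

section Aux

variable {X : Type u} [TopologicalSpace X]

lemma nbhdAssign_univ : NbhdAssign (fun _ : X => (univ : Set X)) :=
  fun x => ⟨isOpen_univ, mem_univ x⟩

instance : Nonempty {U : X → Set X // NbhdAssign U} := ⟨⟨_, nbhdAssign_univ⟩⟩

lemma pdAssign_set_nonempty (U : X → Set X) (hU : NbhdAssign U) :
    {c | ∃ A : Set X, #A = c ∧ ∀ x, (A ∩ U x).Nonempty}.Nonempty :=
  ⟨#(univ : Set X), univ, rfl, fun x => ⟨x, mem_univ x, (hU x).2⟩⟩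

lemma pdAssign_le_mk (U : X → Set X) (hU : NbhdAssign U) : pdAssign U ≤ #X := by
  have h : pdAssign U ≤ #(univ : Set X) :=
    csInf_le (OrderBot.bddBelow _) ⟨univ, rfl, fun x => ⟨x, mem_univ x, (hU x).2⟩⟩
  simpa using h

lemma bddAbove_pd :
    BddAbove (Set.range fun U : {U : X → Set X // NbhdAssign U} => pdAssign U.1) := by
  refine ⟨#X, ?_⟩
  rintro c ⟨U, rfl⟩
  exact pdAssign_le_mk U.1 U.2

lemma pdAssign_le_pdSpace (U : X → Set X) (hU : NbhdAssign U) : pdAssign U ≤ pdSpace X :=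
  le_ciSup bddAbove_pd (⟨U, hU⟩ : {U : X → Set X // NbhdAssign U})

lemma pdSpace_le {c : Cardinal.{u}} (h : ∀ U : X → Set X, NbhdAssign U → pdAssign U ≤ c) :
    pdSpace X ≤ c :=
  ciSup_le fun U => h U.1 U.2

lemma exists_pinning (U : X → Set X) (hU : NbhdAssign U) :
    ∃ A : Set X, #A = pdAssign U ∧ ∀ x, (A ∩ U x).Nonempty :=
  csInf_mem (pdAssign_set_nonempty U hU)

lemma neat_open_big (hneat : Neat X) {G : Set X} (hG : IsOpen G) (hne : G.Nonempty) :
    #X ≤ #G := by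
  have h : Delta X ≤ #G := csInf_le (OrderBot.bddBelow _) ⟨G, hG, hne, rfl⟩
  rwa [hneat] at h

lemma pdSpace_of_isEmpty [IsEmpty X] : pdSpace X = 0 := by
  refine le_antisymm (pdSpace_le fun U hU => ?_) zero_le
  exact csInf_le (OrderBot.bddBelow _) ⟨∅, mk_emptyCollection X, fun x => isEmptyElim x⟩

lemma pdSpace_of_unique [Nonempty X] [Subsingleton X] : pdSpace X = 1 := by
  refine le_antisymm (pdSpace_le fun U hU => ?_) ?_
  · refine csInf_le (OrderBot.bddBelow _) ⟨univ, ?_, fun x => ⟨x, mem_univ x, (hU x).2⟩⟩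
    haveI : Inhabited X := Classical.inhabited_of_nonempty ‹_›
    haveI : Unique X := Unique.mk' X
    simp
  · refine le_trans ?_ (pdAssign_le_pdSpace _ (nbhdAssign_univ (X := X)))
    refine le_csInf (pdAssign_set_nonempty _ (nbhdAssign_univ (X := X))) ?_
    rintro c ⟨A, rfl, hA⟩
    obtain ⟨a, ha, -⟩ := hA (Classical.arbitrary X)
    exact Cardinal.one_le_iff_ne_zero.2 (Cardinal.mk_ne_zero_iff.2 ⟨⟨a, ha⟩⟩)

/-- Distinct representatives: if `ι` is no bigger than `α` and every `G i` has at least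
`#α` elements, then one can injectively choose `z i ∈ G i`. -/
lemma exists_injective_rep {α ι : Type u} (G : ι → Set α) (hι : #ι ≤ #α)
    (hG : ∀ i, #α ≤ #(G i)) :
    ∃ z : ι → α, Function.Injective z ∧ ∀ i, z i ∈ G i := by
  classical
  set β := (#ι).ord.ToType with hβdef
  have hβ : #β = #ι := Cardinal.mk_ord_toType _
  obtain ⟨e⟩ : Nonempty (ι ≃ β) := Cardinal.eq.1 hβ.symm
  have wf : WellFounded ((· < ·) : β → β → Prop) := IsWellFounded.wf
  have key : ∀ (j : β) (ih : ∀ k : β, k < j → α),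
      ((G (e.symm j)) \ (Set.range fun k : (Set.Iio j) => ih k.1 k.2)).Nonempty := by
    intro j ih
    rw [Set.diff_nonempty]
    intro hsub
    have h1 : #(G (e.symm j)) ≤ #(Set.range fun k : (Set.Iio j) => ih k.1 k.2) :=
      Cardinal.mk_le_mk_of_subset hsub
    have h2 : #(Set.range fun k : (Set.Iio j) => ih k.1 k.2) ≤ #(Set.Iio j) :=
      Cardinal.mk_range_le
    have h3 : #(Set.Iio j) < #ι := Cardinal.mk_Iio_toType_ord_lt j
    have : #α < #α :=
      lt_of_le_of_lt ((hG (e.symm j)).trans (h1.trans h2)) (h3.trans_le hι)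
    exact absurd this (lt_irrefl _)
  let F : β → α := wf.fix (fun j ih => (key j ih).choose)
  have hF : ∀ j : β, F j = (key j (fun k _ => F k)).choose := fun j =>
    wf.fix_eq (fun j ih => (key j ih).choose) j
  have hFmem : ∀ j : β,
      F j ∈ (G (e.symm j)) \ (Set.range fun k : (Set.Iio j) => F k.1) := by
    intro j
    have h := (key j (fun k _ => F k)).choose_spec
    rw [hF j]
    exact h
  have hFinj : Function.Injective F := by
    intro j k hjk
    rcases lt_trichotomy j k with h | h | h
    · exact absurd (⟨⟨j, h⟩, hjk⟩ : F k ∈ Set.range fun k' : (Set.Iio k) => F k'.1)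
        (hFmem k).2
    · exact h
    · exact absurd (⟨⟨k, h⟩, hjk.symm⟩ : F j ∈ Set.range fun k' : (Set.Iio j) => F k'.1)
        (hFmem j).2
  refine ⟨fun i => F (e i), fun i i' h => e.injective (hFinj h), fun i => ?_⟩
  have h := (hFmem (e i)).1
  rwa [e.symm_apply_apply] at h

/-- In a neat space, any assignment-size family of nonempty open sets can be pinned
by a set of size at most `pdSpace X`. -/
lemma pin_family (hneat : Neat X) {ι : Type u} (G : ι → Set X)
    (hopen : ∀ i, IsOpen (G i)) (hne : ∀ i, (G i).Nonempty) (hι : #ι ≤ #X) :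
    ∃ A : Set X, #A ≤ pdSpace X ∧ ∀ i, (A ∩ G i).Nonempty := by
  classical
  have hbig : ∀ i, #X ≤ #(G i) := fun i => neat_open_big hneat (hopen i) (hne i)
  obtain ⟨z, hzinj, hzmem⟩ := exists_injective_rep G hι hbig
  set N : X → Set X := fun x => if h : ∃ q : ι, z q = x then G h.choose else univ with hNdef
  have hN : NbhdAssign N := by
    intro x
    constructor
    · simp only [hNdef]
      split_ifs with h
      · exact hopen _
      · exact isOpen_univ
    · simp only [hNdef]
      split_ifs with h
      · have hm := hzmem h.choose
        rwa [h.choose_spec] at hm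
      · trivial
  obtain ⟨A, hAcard, hApin⟩ := exists_pinning N hN
  refine ⟨A, hAcard ▸ pdAssign_le_pdSpace N hN, fun q => ?_⟩
  have h : ∃ q' : ι, z q' = z q := ⟨q, rfl⟩
  have hch : h.choose = q := hzinj h.choose_spec
  have hApq := hApin (z q)
  have hNz : N (z q) = G q := by
    simp only [hNdef]
    rw [dif_pos h, hch]
  rwa [hNz] at hApq

lemma aleph0_le_pdSpace [T2Space X] [Infinite X] : ℵ₀ ≤ pdSpace X := by
  classical
  rw [Cardinal.aleph0_le]
  intro m
  obtain x : Fin m ↪ X := (Fin.valEmbedding).trans (Infinite.natEmbedding X)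
  choose s t hs ht hxs hxt hdisj using
    fun (i j : Fin m) (h : i ≠ j) => t2_separation (x.injective.ne h)
  let s' : Fin m → Fin m → Set X := fun i j => if h : i ≠ j then s i j h else univ
  let t' : Fin m → Fin m → Set X := fun i j => if h : i ≠ j then t i j h else univ
  have hs'open : ∀ i j, IsOpen (s' i j) := by
    intro i j; simp only [s']; split_ifs with h; exacts [hs i j h, isOpen_univ]
  have ht'open : ∀ i j, IsOpen (t' i j) := by
    intro i j; simp only [t']; split_ifs with h; exacts [ht i j h, isOpen_univ]
  have hxs' : ∀ i j, x i ∈ s' i j := by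
    intro i j; simp only [s']; split_ifs with h
    exacts [hxs i j h, mem_univ _]
  have hxt' : ∀ i j, x j ∈ t' i j := by
    intro i j; simp only [t']; split_ifs with h
    exacts [hxt i j h, mem_univ _]
  have hdisj' : ∀ i j, i ≠ j → Disjoint (s' i j) (t' i j) := by
    intro i j h; simp only [s', t', dif_pos h]; exact hdisj i j h
  let V : Fin m → Set X := fun i => ⋂ j, (s' i j ∩ t' j i)
  have hVopen : ∀ i, IsOpen (V i) :=
    fun i => isOpen_iInter_of_finite fun j => (hs'open i j).inter (ht'open j i)
  have hxV : ∀ i, x i ∈ V i := fun i =>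
    Set.mem_iInter.2 fun j => ⟨hxs' i j, hxt' j i⟩
  have hVdisj : ∀ i k : Fin m, i ≠ k → Disjoint (V i) (V k) := by
    intro i k h
    have h1 : V i ⊆ s' i k := fun y hy => (Set.mem_iInter.1 hy k).1
    have h2 : V k ⊆ t' i k := fun y hy => (Set.mem_iInter.1 hy i).2
    exact Set.disjoint_of_subset h1 h2 (hdisj' i k h)
  let M : X → Set X := fun y => if h : ∃ i, x i = y then V h.choose else univ
  have hM : NbhdAssign M := by
    intro y
    constructor
    · simp only [M]
      split_ifs with h
      · exact hVopen _
      · exact isOpen_univ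
    · simp only [M]
      split_ifs with h
      · have hm := hxV h.choose
        rwa [h.choose_spec] at hm
      · trivial
  have hle : (m : Cardinal.{u}) ≤ pdAssign M := by
    refine le_csInf (pdAssign_set_nonempty M hM) ?_
    rintro c ⟨A, rfl, hA⟩
    have hAV : ∀ i, (A ∩ V i).Nonempty := by
      intro i
      have h : ∃ i', x i' = x i := ⟨i, rfl⟩
      have hch : h.choose = i := x.injective h.choose_spec
      have hAi := hA (x i)
      have hMx : M (x i) = V i := by
        simp only [M]
        rw [dif_pos h, hch]
      rwa [hMx] at hAi
    choose a haA haV using hAV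
    have hainj : Function.Injective a := by
      intro i k hik
      by_contra hne
      exact Set.disjoint_left.1 (hVdisj i k hne) (haV i) (hik ▸ haV k)
    have hemb : Function.Injective
        (fun i : ULift.{u} (Fin m) => (⟨a i.down, haA i.down⟩ : ↥A)) := by
      intro i j hij
      have h1 : a i.down = a j.down := congrArg Subtype.val hij
      exact congrArg ULift.up (hainj h1)
    calc (m : Cardinal.{u}) = #(ULift.{u} (Fin m)) := by simp
      _ ≤ #↥A := Cardinal.mk_le_of_injective hemb
  exact hle.trans (pdAssign_le_pdSpace M hM)

end Aux

/-- for a neat `T₂` space `X` and `0 < n < ω`, `pd(Xⁿ) = pd(X)`. -/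
theorem pd_finpow_eq_pd (X : Type u) [TopologicalSpace X] [T2Space X] (hneat : Neat X)
    (n : ℕ) (hn : 0 < n) :
    pdSpace (Fin n → X) = pdSpace X := by
  classical
  have easy : pdSpace X ≤ pdSpace (Fin n → X) := by
    apply pdSpace_le
    intro U hU
    set i0 : Fin n := ⟨0, hn⟩ with hi0
    set W : (Fin n → X) → Set (Fin n → X) :=
      fun f => (fun g : Fin n → X => g i0) ⁻¹' (U (f i0)) with hWdef
    have hW : NbhdAssign W :=
      fun f => ⟨(hU (f i0)).1.preimage (continuous_apply i0), (hU (f i0)).2⟩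
    refine le_trans ?_ (pdAssign_le_pdSpace W hW)
    refine le_csInf (pdAssign_set_nonempty W hW) ?_
    rintro c ⟨A, rfl, hA⟩
    have hD : ∀ x : X, (((fun g : Fin n → X => g i0) '' A) ∩ U x).Nonempty := by
      intro x
      obtain ⟨g, hgA, hg⟩ := hA (fun _ => x)
      exact ⟨g i0, ⟨g, hgA, rfl⟩, hg⟩
    exact le_trans (csInf_le (OrderBot.bddBelow _) ⟨_, rfl, hD⟩) Cardinal.mk_image_le
  refine le_antisymm ?_ easy
  rcases finite_or_infinite X with hfin | hinf
  · haveI := hfin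
    rcases isEmpty_or_nonempty X with he | hne
    · haveI : IsEmpty (Fin n → X) := ⟨fun f => he.false (f ⟨0, hn⟩)⟩
      rw [pdSpace_of_isEmpty, pdSpace_of_isEmpty]
    · have h1 : #X ≤ 1 := by
        obtain ⟨x⟩ := hne
        have hd : Delta X ≤ 1 :=
          csInf_le (OrderBot.bddBelow _) ⟨{x}, isOpen_discrete _, ⟨x, rfl⟩, mk_singleton x⟩
        rw [← hneat]
        exact hd
      haveI : Subsingleton X := Cardinal.le_one_iff_subsingleton.1 h1
      haveI : Nonempty (Fin n → X) := ⟨fun _ => Classical.arbitrary X⟩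
      rw [pdSpace_of_unique, pdSpace_of_unique]
  · haveI := hinf
    have hX0 : ℵ₀ ≤ #X := Cardinal.infinite_iff.1 hinf
    have hpd0 : ℵ₀ ≤ pdSpace X := aleph0_le_pdSpace
    apply pdSpace_le
    intro W hW
    have hbox : ∀ p : Fin n → X, ∃ U : Fin n → Set X,
        (∀ i, IsOpen (U i) ∧ p i ∈ U i) ∧ Set.pi Set.univ U ⊆ W p := by
      intro p
      obtain ⟨I, u, hu, hsub⟩ := (isOpen_pi_iff.1 (hW p).1) p (hW p).2
      refine ⟨fun i => if i ∈ I then u i else univ, fun i => ?_, ?_⟩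
      · by_cases h : i ∈ I
        · simpa [h] using hu i h
        · simp [h]
      · intro f hf
        apply hsub
        intro i hi
        have h := hf i (mem_univ i)
        have hi' : i ∈ I := hi
        simpa [hi'] using h
    choose U hU hUsub using hbox
    have hι : #(Fin n × (Fin n → X)) ≤ #X := by
      have h1 : #(Fin n × (Fin n → X)) =
          Cardinal.lift.{u, 0} #(Fin n) * Cardinal.lift.{0, u} #(Fin n → X) :=
        Cardinal.mk_prod _ _
      have h2 : #(Fin n → X) =
          Cardinal.lift.{0, u} #X ^ Cardinal.lift.{u, 0} #(Fin n) :=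
        Cardinal.mk_arrow _ _
      rw [h1, h2]
      simp only [Cardinal.mk_fin, Cardinal.lift_natCast, Cardinal.lift_id,
        Cardinal.lift_uzero]
      rw [Cardinal.power_natCast, Cardinal.power_nat_eq hX0 hn]
      rw [Cardinal.mul_eq_right hX0 ((Cardinal.nat_lt_aleph0 n).le.trans hX0)
        (Nat.cast_ne_zero.2 hn.ne')]
    obtain ⟨A, hAle, hAG⟩ := pin_family hneat (fun q : Fin n × (Fin n → X) => U q.2 q.1)
      (fun q => (hU q.2 q.1).1) (fun q => ⟨_, (hU q.2 q.1).2⟩) hι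
    set B : Set (Fin n → X) := {f | ∀ i, f i ∈ A} with hBdef
    have hBpin : ∀ p : Fin n → X, (B ∩ W p).Nonempty := by
      intro p
      have hAi : ∀ i : Fin n, (A ∩ U p i).Nonempty := fun i => hAG (i, p)
      choose a ha hA' using hAi
      refine ⟨a, fun i => ha i, hUsub p ?_⟩
      intro i _
      exact hA' i
    have hBle : #B ≤ pdSpace X := by
      have hinj : Function.Injective
          (fun f : B => (fun i => (⟨f.1 i, f.2 i⟩ : ↥A) : Fin n → ↥A)) := by
        intro f g h
        exact Subtype.ext (funext fun i => congrArg Subtype.val (congrFun h i))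
      have h1 : #B ≤ #(Fin n → ↥A) := Cardinal.mk_le_of_injective hinj
      have h2 : #(Fin n → ↥A) =
          Cardinal.lift.{0, u} #↥A ^ Cardinal.lift.{u, 0} #(Fin n) :=
        Cardinal.mk_arrow _ _
      rw [h2] at h1
      simp only [Cardinal.mk_fin, Cardinal.lift_natCast, Cardinal.lift_uzero] at h1
      refine h1.trans ?_
      calc (#↥A) ^ ((n : ℕ) : Cardinal.{u})
          ≤ (pdSpace X) ^ ((n : ℕ) : Cardinal.{u}) := Cardinal.power_le_power_right hAle
        _ = pdSpace X := by
            rw [Cardinal.power_natCast]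
            exact Cardinal.power_nat_eq hpd0 hn
    exact le_trans (csInf_le (OrderBot.bddBelow _) ⟨B, rfl, hBpin⟩) hBle
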